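/- arXiv:2005.06757 — 2 statements merged into one kernel-verified Lean document; each statement's English description precedes it below -/
import Mathlib

section
/- Lemma 1 (one-variable AM–GM inequality for quenched averages): Let B ⊆ V and suppose P_B satisfies the density-ratio condition with parameter b ∈ ℝ. Let X and f be measurable real-valued functions of the coupling vector J such that X(J) > 0 and X(flip_B J) = 1/X(J) for all J, and f(J) ≥ 0 and f(flip_B J) = f(J) for all J. Then E[f(J) X(J)] ≥ E[f(J) exp(−b J_B)]. -/
open MeasureTheory Real

variable {V : Type*}

/-- Spin value of a configuration at a site: `+1` or `-1`. -/
noncomputable def spin (σ : V → Bool) (i : V) : ℝ := if σ i then 1 else -1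

/-- `σ_A = ∏_{i ∈ A} σ_i`. -/
noncomputable def sigmaA (A : Finset V) (σ : V → Bool) : ℝ := ∏ i ∈ A, spin σ i

/-- `β Σ_A λ_A J_A σ_A` (minus the Hamiltonian, times β). -/
noncomputable def energy [Fintype V] [DecidableEq V] (β : ℝ) (lam J : Finset V → ℝ)
    (σ : V → Bool) : ℝ := β * ∑ A : Finset V, lam A * J A * sigmaA A σ

/-- Partition function `Z_J`. -/
noncomputable def Zfun [Fintype V] [DecidableEq V] (β : ℝ) (lam J : Finset V → ℝ) : ℝ :=
  ∑ σ : V → Bool, Real.exp (energy β lam J σ)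

/-- Gibbs expectation `⟨σ_B⟩_J`. -/
noncomputable def corr [Fintype V] [DecidableEq V] (β : ℝ) (lam J : Finset V → ℝ)
    (B : Finset V) : ℝ :=
  (∑ σ : V → Bool, sigmaA B σ * Real.exp (energy β lam J σ)) / Zfun β lam J

/-- Gibbs expectation `⟨σ_B σ_C⟩_J`. -/
noncomputable def corr2 [Fintype V] [DecidableEq V] (β : ℝ) (lam J : Finset V → ℝ)
    (B C : Finset V) : ℝ :=
  (∑ σ : V → Bool, sigmaA B σ * sigmaA C σ * Real.exp (energy β lam J σ)) / Zfun β lam J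

/-- Negate the coupling indexed by `B`. -/
noncomputable def flipJ [DecidableEq V] (B : Finset V) (J : Finset V → ℝ) : Finset V → ℝ :=
  Function.update J B (-(J B))

/-- The density-ratio condition `P(-x) = exp(-2 b x) P(x)`: the pushforward of `P` under
negation equals the measure with density `x ↦ exp (-2 b x)` with respect to `P`. -/
def densityRatio (P : Measure ℝ) (b : ℝ) : Prop :=
  P.map (fun x => -x) = P.withDensity (fun x => ENNReal.ofReal (Real.exp (-2 * b * x)))

/-! The flip `J_B ↦ -J_B` preserves `f` and inverts `X`, and by the density-ratio condition it
turns the measure into one with density `exp (-2 b J_B)`. Hence `E[f X] = E[(f / X) exp (-2 b J_B)]`,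
so `2 E[f X]` is the integral of `f X + (f / X) exp (-2 b J_B)`, which pointwise dominates
`2 f exp (-b J_B)` by AM–GM. -/

open scoped ENNReal

lemma lintegral_comp_neg_of_densityRatio {P : Measure ℝ} {b : ℝ} (hP : densityRatio P b)
    {g : ℝ → ℝ≥0∞} (hg : Measurable g) :
    ∫⁻ x, g (-x) ∂P = ∫⁻ x, g x * ENNReal.ofReal (exp (-2 * b * x)) ∂P := by
  rw [← lintegral_map hg measurable_neg, hP,
    lintegral_withDensity_eq_lintegral_mul _ (by fun_prop) hg]
  simp only [Pi.mul_apply, mul_comm]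

lemma measurable_flipJ [DecidableEq V] (B : Finset V) : Measurable (flipJ B) := by
  unfold flipJ
  fun_prop

lemma lintegral_comp_flipJ [Fintype V] [DecidableEq V] {P : Finset V → Measure ℝ}
    [∀ A, SigmaFinite (P A)] {B : Finset V} {b : ℝ} (hPB : densityRatio (P B) b)
    {g : (Finset V → ℝ) → ℝ≥0∞} (hg : Measurable g) :
    ∫⁻ J, g (flipJ B J) ∂Measure.pi P
      = ∫⁻ J, g J * ENNReal.ofReal (exp (-2 * b * J B)) ∂Measure.pi P := by
  refine lintegral_eq_of_lmarginal_eq {B} (hg.comp (measurable_flipJ B)) (by fun_prop) ?_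
  ext J
  simp only [lmarginal_singleton, flipJ, Function.update_idem, Function.update_self]
  exact lintegral_comp_neg_of_densityRatio hPB (hg.comp (measurable_update J))

lemma two_mul_mul_le_mul_add_div_mul_sq {f x : ℝ} (hf : 0 ≤ f) (hx : 0 < x) (u : ℝ) :
    2 * (f * u) ≤ f * x + f / x * u ^ 2 := by
  have hsq : 0 ≤ f * (x - u) ^ 2 / x := by positivity
  have hid : f * (x - u) ^ 2 / x = f * x + f / x * u ^ 2 - 2 * (f * u) := by
    field_simp
    ring
  linarith

lemma lintegral_ofReal_mul_exp_le_of_flipJ [Fintype V] [DecidableEq V]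
    {P : Finset V → Measure ℝ} [∀ A, SigmaFinite (P A)] {B : Finset V} {b : ℝ}
    (hPB : densityRatio (P B) b) {X f : (Finset V → ℝ) → ℝ} (hX : Measurable X)
    (hf : Measurable f) (hXpos : ∀ J, 0 < X J) (hXflip : ∀ J, X (flipJ B J) = 1 / X J)
    (hf0 : ∀ J, 0 ≤ f J) (hfflip : ∀ J, f (flipJ B J) = f J) :
    ∫⁻ J, ENNReal.ofReal (f J * exp (-b * J B)) ∂Measure.pi P
      ≤ ∫⁻ J, ENNReal.ofReal (f J * X J) ∂Measure.pi P := by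
  set μ := Measure.pi P
  have hflip : ∫⁻ J, ENNReal.ofReal (f J * X J) ∂μ
      = ∫⁻ J, ENNReal.ofReal (f J / X J * exp (-b * J B) ^ 2) ∂μ := by
    have h := lintegral_comp_flipJ (g := fun J => ENNReal.ofReal (f J / X J)) hPB (by fun_prop)
    simp only [hfflip, hXflip, div_div_eq_mul_div, div_one] at h
    rw [h]
    congr with J
    rw [← ENNReal.ofReal_mul (div_nonneg (hf0 J) (hXpos J).le), ← exp_nat_mul]
    ring_nf
  have hamgm : 2 * ∫⁻ J, ENNReal.ofReal (f J * exp (-b * J B)) ∂μ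
      ≤ 2 * ∫⁻ J, ENNReal.ofReal (f J * X J) ∂μ :=
    calc 2 * ∫⁻ J, ENNReal.ofReal (f J * exp (-b * J B)) ∂μ
        = ∫⁻ J, ENNReal.ofReal (2 * (f J * exp (-b * J B))) ∂μ := by
          rw [← lintegral_const_mul' _ _ ENNReal.ofNat_ne_top]
          simp only [ENNReal.ofReal_mul zero_le_two, ENNReal.ofReal_ofNat]
      _ ≤ ∫⁻ J, ENNReal.ofReal (f J * X J) + ENNReal.ofReal (f J / X J * exp (-b * J B) ^ 2) ∂μ :=
          lintegral_mono fun J => (ENNReal.ofReal_le_ofReal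
            (two_mul_mul_le_mul_add_div_mul_sq (hf0 J) (hXpos J) _)).trans ENNReal.ofReal_add_le
      _ = 2 * ∫⁻ J, ENNReal.ofReal (f J * X J) ∂μ := by
          rw [lintegral_add_left (by fun_prop), ← hflip, two_mul]
  exact (ENNReal.mul_le_mul_iff_right two_ne_zero ENNReal.ofNat_ne_top).mp hamgm

theorem lemma1_one_variable_AMGM_general [Fintype V] [DecidableEq V]
    (P : Finset V → Measure ℝ) [∀ A, IsProbabilityMeasure (P A)]
    (B : Finset V) (b : ℝ) (hPB : densityRatio (P B) b)
    (X f : (Finset V → ℝ) → ℝ) (hX : Measurable X) (hf : Measurable f)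
    (hXpos : ∀ J, 0 < X J)
    (hXflip : ∀ J, X (flipJ B J) = 1 / X J)
    (hf0 : ∀ J, 0 ≤ f J)
    (hfflip : ∀ J, f (flipJ B J) = f J)
    (hint1 : Integrable (fun J => f J * X J) (Measure.pi P)) :
    ∫ J, f J * Real.exp (-b * J B) ∂(Measure.pi P) ≤
      ∫ J, f J * X J ∂(Measure.pi P) := by
  have hfX : ∀ J, 0 ≤ f J * X J := fun J => mul_nonneg (hf0 J) (hXpos J).le
  rw [integral_eq_lintegral_of_nonneg_ae
      (ae_of_all _ fun J => mul_nonneg (hf0 J) (exp_pos _).le) (by fun_prop),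
    integral_eq_lintegral_of_nonneg_ae (ae_of_all _ hfX) hint1.1]
  exact ENNReal.toReal_mono ((hasFiniteIntegral_iff_ofReal (ae_of_all _ hfX)).mp hint1.2).ne
    (lintegral_ofReal_mul_exp_le_of_flipJ hPB hX hf hXpos hXflip hf0 hfflip)

/-- Lemma 1: one-variable AM–GM inequality for quenched averages. -/
theorem lemma1_one_variable_AMGM [Fintype V] [DecidableEq V]
    (P : Finset V → Measure ℝ) [∀ A, IsProbabilityMeasure (P A)]
    (B : Finset V) (b : ℝ) (hPB : densityRatio (P B) b)
    (X f : (Finset V → ℝ) → ℝ) (hX : Measurable X) (hf : Measurable f)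
    (hXpos : ∀ J, 0 < X J)
    (hXflip : ∀ J, X (flipJ B J) = 1 / X J)
    (hf0 : ∀ J, 0 ≤ f J)
    (hfflip : ∀ J, f (flipJ B J) = f J)
    (hint1 : Integrable (fun J => f J * X J) (Measure.pi P))
    (hint2 : Integrable (fun J => f J * Real.exp (-b * J B)) (Measure.pi P)) :
    ∫ J, f J * Real.exp (-b * J B) ∂(Measure.pi P) ≤
      ∫ J, f J * X J ∂(Measure.pi P) :=
  lemma1_one_variable_AMGM_general P B b hPB X f hX hf hXpos hXflip hf0 hfflip hint1
end

section
/- Double-flip partition-function ratio identity: Let B, C ⊆ V with B ≠ C. For every coupling vector J, the ratio of partition functions obtained by negating the couplings J_B and J_C satisfies Z_{flip_B (flip_C J)} / Z_J = cosh(2βλ_B J_B) cosh(2βλ_C J_C) + sinh(2βλ_B J_B) sinh(2βλ_C J_C) ⟨σ_B σ_C⟩_J − sinh(2βλ_B J_B) cosh(2βλ_C J_C) ⟨σ_B⟩_J − cosh(2βλ_B J_B) sinh(2βλ_C J_C) ⟨σ_C⟩_J. -/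
open MeasureTheory Real

variable {V : Type*}

/-!
Negating `J_B` changes the exponent by `-2βλ_B J_B σ_B`, and since `σ_B = ±1`,
`exp (-a σ_B) = cosh a - σ_B sinh a`. The double flip therefore multiplies each Boltzmann
weight by a polynomial of degree one in `σ_B` and in `σ_C` (as `B ≠ C`,
the outer flip still sees the original `J_B`), and summing over configurations gives the identity.
-/

open Finset

lemma sigmaA_eq_one_or_neg_one (A : Finset V) (σ : V → Bool) :
    sigmaA A σ = 1 ∨ sigmaA A σ = -1 :=
  prod_induction _ (fun x : ℝ => x = 1 ∨ x = -1)
    (by rintro _ _ (rfl | rfl) (rfl | rfl) <;> norm_num) (Or.inl rfl)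
    (fun _ _ => by unfold spin; split <;> simp)

lemma exp_neg_mul_eq_cosh_sub_mul_sinh (a : ℝ) {s : ℝ} (hs : s = 1 ∨ s = -1) :
    exp (-(a * s)) = cosh a - s * sinh a := by
  rcases hs with rfl | rfl
  · simp [← cosh_sub_sinh]
  · simp [← cosh_add_sinh]

section Flip

variable [Fintype V] [DecidableEq V]

lemma energy_flipJ (β : ℝ) (lam J : Finset V → ℝ) (B : Finset V) (σ : V → Bool) :
    energy β lam (flipJ B J) σ = energy β lam J σ - 2 * β * lam B * J B * sigmaA B σ := by
  have hdiff : ∑ A, lam A * flipJ B J A * sigmaA A σ - ∑ A, lam A * J A * sigmaA A σ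
      = -2 * (lam B * J B * sigmaA B σ) := by
    rw [← sum_sub_distrib, sum_eq_single B (fun A _ hA => by simp [flipJ, hA]) (by simp)]
    simp only [flipJ, Function.update_self]
    ring
  unfold energy
  linear_combination β * hdiff

lemma exp_energy_flipJ_flipJ (β : ℝ) (lam J : Finset V → ℝ) {B C : Finset V} (hBC : B ≠ C)
    (σ : V → Bool) :
    exp (energy β lam (flipJ B (flipJ C J)) σ) = exp (energy β lam J σ)
      * (cosh (2 * β * lam B * J B) - sigmaA B σ * sinh (2 * β * lam B * J B))
      * (cosh (2 * β * lam C * J C) - sigmaA C σ * sinh (2 * β * lam C * J C)) := by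
  have hJB : flipJ C J B = J B := Function.update_of_ne hBC _ _
  rw [energy_flipJ, energy_flipJ, hJB, ← exp_neg_mul_eq_cosh_sub_mul_sinh _
    (sigmaA_eq_one_or_neg_one B σ), ← exp_neg_mul_eq_cosh_sub_mul_sinh _
    (sigmaA_eq_one_or_neg_one C σ), ← exp_add, ← exp_add]
  ring_nf

lemma Zfun_flipJ_flipJ (β : ℝ) (lam J : Finset V → ℝ) {B C : Finset V} (hBC : B ≠ C) :
    Zfun β lam (flipJ B (flipJ C J)) =
      cosh (2 * β * lam B * J B) * cosh (2 * β * lam C * J C) * Zfun β lam J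
      + sinh (2 * β * lam B * J B) * sinh (2 * β * lam C * J C)
          * ∑ σ, sigmaA B σ * sigmaA C σ * exp (energy β lam J σ)
      - sinh (2 * β * lam B * J B) * cosh (2 * β * lam C * J C)
          * ∑ σ, sigmaA B σ * exp (energy β lam J σ)
      - cosh (2 * β * lam B * J B) * sinh (2 * β * lam C * J C)
          * ∑ σ, sigmaA C σ * exp (energy β lam J σ) := by
  simp only [Zfun, exp_energy_flipJ_flipJ β lam J hBC, mul_sum, ← sum_add_distrib,
    ← sum_sub_distrib]
  exact sum_congr rfl fun _ _ => by ring

lemma Zfun_pos (β : ℝ) (lam J : Finset V → ℝ) : 0 < Zfun β lam J :=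
  sum_pos (fun _ _ => exp_pos _) univ_nonempty

end Flip

theorem double_flip_ratio_general [Fintype V] [DecidableEq V]
    (β : ℝ) (lam : Finset V → ℝ) (J : Finset V → ℝ)
    (B C : Finset V) (hBC : B ≠ C) :
    Zfun β lam (flipJ B (flipJ C J)) / Zfun β lam J =
      Real.cosh (2 * β * lam B * J B) * Real.cosh (2 * β * lam C * J C)
      + Real.sinh (2 * β * lam B * J B) * Real.sinh (2 * β * lam C * J C)
          * corr2 β lam J B C
      - Real.sinh (2 * β * lam B * J B) * Real.cosh (2 * β * lam C * J C)
          * corr β lam J B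
      - Real.cosh (2 * β * lam B * J B) * Real.sinh (2 * β * lam C * J C)
          * corr β lam J C := by
  have hZ := (Zfun_pos β lam J).ne'
  rw [Zfun_flipJ_flipJ β lam J hBC, corr, corr, corr2]
  field_simp

/-- Double-flip partition-function ratio identity. -/
theorem double_flip_ratio [Fintype V] [DecidableEq V]
    (β : ℝ) (hβ : 0 < β) (lam : Finset V → ℝ) (J : Finset V → ℝ)
    (B C : Finset V) (hBC : B ≠ C) :
    Zfun β lam (flipJ B (flipJ C J)) / Zfun β lam J =
      Real.cosh (2 * β * lam B * J B) * Real.cosh (2 * β * lam C * J C)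
      + Real.sinh (2 * β * lam B * J B) * Real.sinh (2 * β * lam C * J C)
          * corr2 β lam J B C
      - Real.sinh (2 * β * lam B * J B) * Real.cosh (2 * β * lam C * J C)
          * corr β lam J B
      - Real.cosh (2 * β * lam B * J B) * Real.sinh (2 * β * lam C * J C)
          * corr β lam J C :=
  double_flip_ratio_general β lam J B C hBC
end
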